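/- arXiv:1805.06330 — 4 statements merged into one kernel-verified Lean document; each statement's English description precedes it below -/
import Mathlib

section
/- Let V be a faithful irreducible ℚ-representation of a finite abelian group A. Then A ≅ C_n for some n and V is isomorphic as an A-representation to the cyclotomic module V_n = ℚ[t]/(Φ_n(t)), with a generator of A acting by multiplication by [t]. -/
/-!
An endomorphism commuting with the action is zero or injective (Schur), so the subalgebra of
`End V` generated by the commutative image of `A` is a domain; `A` embeds in its units and is
therefore cyclic, generated by some `a`. The same argument for the subalgebra `ℚ[f]`, `f = ρ a`,
makes the minimal polynomial of `f` irreducible; as it divides `X ^ n - 1` it is some `Φ_d` with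
`d ∣ n`, and faithfulness forces `d = n`. Finally `ℚ[X]/(Φ_n) → V`, `p ↦ p(f) v₀`, is injective
by Schur and surjective because its image is `f`-invariant.
-/

open Polynomial

namespace Module.End

section

variable {R M : Type*} [CommRing R] [AddCommGroup M] [Module R M]

theorem injective_of_forall_commute {S : Set (Module.End R M)}
    (hS : ∀ W : Submodule R M, (∀ s ∈ S, ∀ v ∈ W, s v ∈ W) → W = ⊥ ∨ W = ⊤)
    {g : Module.End R M} (hg : ∀ s ∈ S, Commute s g) (hg0 : g ≠ 0) : Function.Injective g := by
  have hker : ∀ s ∈ S, ∀ v ∈ LinearMap.ker g, s v ∈ LinearMap.ker g := fun s hs v hv => by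
    rw [LinearMap.mem_ker] at hv ⊢
    rw [← mul_apply, ← (hg s hs).eq, mul_apply, hv, map_zero]
  rcases hS _ hker with h | h
  · exact LinearMap.ker_eq_bot.mp h
  · exact absurd (LinearMap.ker_eq_top.mp h) hg0

theorem isDomain_adjoin [Nontrivial M] {S : Set (Module.End R M)}
    (hS : ∀ W : Submodule R M, (∀ s ∈ S, ∀ v ∈ W, s v ∈ W) → W = ⊥ ∨ W = ⊤)
    (hcomm : ∀ x ∈ S, ∀ y ∈ S, Commute x y) : IsDomain (Algebra.adjoin R S) := by
  have hcent : Algebra.adjoin R S ≤ Subalgebra.centralizer R S :=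
    Algebra.adjoin_le fun x hx => Set.mem_centralizer_iff.mpr fun y hy => (hcomm y hy x hx).eq
  refine @NoZeroDivisors.to_isDomain _ _ _ ⟨fun {x y} hxy => or_iff_not_imp_left.mpr fun hx => ?_⟩
  have hinj := injective_of_forall_commute hS (g := x) (fun s hs => hcent x.2 s hs)
    (by simpa using hx)
  ext v
  exact hinj (by simpa using congr(($hxy : Module.End R M) v))

open scoped IsMulCommutative in
theorem isCyclic_of_injective_of_irreducible {A : Type*} [CommGroup A] [Finite A] [Nontrivial M]
    (ρ : A →* Module.End R M) (hρ : Function.Injective ρ)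
    (hirr : ∀ W : Submodule R M, (∀ a : A, ∀ v ∈ W, ρ a v ∈ W) → W = ⊥ ∨ W = ⊤) :
    IsCyclic A := by
  have hcomm : ∀ x ∈ Set.range ρ, ∀ y ∈ Set.range ρ, Commute x y := by
    rintro _ ⟨a, rfl⟩ _ ⟨b, rfl⟩
    exact (Commute.all a b).map ρ
  have := isDomain_adjoin (S := Set.range ρ) (fun W hW => hirr W fun a => hW _ ⟨a, rfl⟩) hcomm
  have := Algebra.isMulCommutative_adjoin R fun x hx y hy => (hcomm x hx y hy).eq
  exact isCyclic_of_injective_ringHom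
    (ρ.codRestrict (Algebra.adjoin R (Set.range ρ)) fun a =>
      Algebra.subset_adjoin (Set.mem_range_self a))
    fun a b h => hρ (congrArg Subtype.val h)

end

section

variable {K V : Type*} [Field K] [AddCommGroup V] [Module K V] [Nontrivial V]

theorem irreducible_minpoly_of_forall_invariant [FiniteDimensional K V] (f : Module.End K V)
    (hf : ∀ W : Submodule K V, (∀ v ∈ W, f v ∈ W) → W = ⊥ ∨ W = ⊤) :
    Irreducible (minpoly K f) := by
  have := isDomain_adjoin (S := {f}) (fun W hW => hf W (hW f rfl)) (by simp)
  let g : Algebra.adjoin K {f} := ⟨f, Algebra.self_mem_adjoin_singleton K f⟩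
  have hg : IsIntegral K g :=
    (isIntegral_algHom_iff (Algebra.adjoin K {f}).val Subtype.val_injective).mp
      (Algebra.IsIntegral.isIntegral f)
  rw [show minpoly K f = minpoly K g from
    minpoly.algHom_eq (Algebra.adjoin K {f}).val Subtype.val_injective g]
  exact minpoly.irreducible hg

theorem exists_linearEquiv_quotient_minpoly (f : Module.End K V)
    (hf : ∀ W : Submodule K V, (∀ v ∈ W, f v ∈ W) → W = ⊥ ∨ W = ⊤) :
    ∃ e : V ≃ₗ[K] K[X] ⧸ Ideal.span {minpoly K f},
      ∀ v : V, e (f v) = Ideal.Quotient.mk (Ideal.span {minpoly K f}) X * e v := by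
  set I := Ideal.span {minpoly K f}
  let Φ : K[X] ⧸ I →ₐ[K] Module.End K V := Ideal.Quotient.liftₐ I (aeval f) fun q hq => by
    obtain ⟨r, rfl⟩ := Ideal.mem_span_singleton.mp hq
    simp
  have hΦ : ∀ q, Φ (Ideal.Quotient.mk I q) = aeval f q := fun _ => rfl
  have hΦX : Φ (Ideal.Quotient.mk I X) = f := by rw [hΦ, aeval_X]
  have hΦinj : Function.Injective Φ := by
    refine (injective_iff_map_eq_zero Φ).mpr fun k hk => ?_
    obtain ⟨q, rfl⟩ := Ideal.Quotient.mk_surjective k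
    exact Ideal.Quotient.eq_zero_iff_mem.mpr
      (Ideal.mem_span_singleton.mpr (minpoly.dvd K f (hΦ q ▸ hk)))
  obtain ⟨v₀, hv₀⟩ := exists_ne (0 : V)
  let Ψ : (K[X] ⧸ I) →ₗ[K] V := LinearMap.applyₗ v₀ ∘ₗ Φ.toLinearMap
  have hΨ : ∀ k, Ψ (Ideal.Quotient.mk I X * k) = f (Ψ k) := fun k => by
    simp [Ψ, hΦX]
  have hΨinj : Function.Injective Ψ := by
    refine (injective_iff_map_eq_zero Ψ).mpr fun k hk => by_contra fun hk0 => hv₀ ?_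
    have hcomm : ∀ s ∈ ({f} : Set (Module.End K V)), Commute s (Φ k) := by
      rintro s rfl
      exact hΦX ▸ (Commute.all _ k).map Φ
    refine injective_of_forall_commute (S := {f}) (fun W hW => hf W (hW f rfl)) hcomm
      ((map_ne_zero_iff Φ hΦinj).mpr hk0) (hk.trans (map_zero _).symm)
  have hΨsurj : Function.Surjective Ψ := by
    refine LinearMap.range_eq_top.mp ((hf _ ?_).resolve_left fun h => hv₀ ?_)
    · rintro _ ⟨k, rfl⟩
      exact ⟨_, hΨ k⟩
    · have h1 : Ψ 1 ∈ LinearMap.range Ψ := LinearMap.mem_range_self Ψ 1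
      rw [h, Submodule.mem_bot] at h1
      simpa [Ψ] using h1
  let e := LinearEquiv.ofBijective Ψ ⟨hΨinj, hΨsurj⟩
  exact ⟨e.symm, fun v => e.symm_apply_eq.mpr
    ((hΨ _).trans (congrArg f (e.apply_symm_apply v))).symm⟩

end

end Module.End

theorem minpoly_eq_cyclotomic_orderOf {B : Type*} [Ring B] [Algebra ℚ B] {x : B}
    (hx : Irreducible (minpoly ℚ x)) (hpos : 0 < orderOf x) :
    minpoly ℚ x = cyclotomic (orderOf x) ℚ := by
  have hdvd : minpoly ℚ x ∣ ∏ d ∈ (orderOf x).divisors, cyclotomic d ℚ := by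
    rw [prod_cyclotomic_eq_X_pow_sub_one hpos]
    exact minpoly.dvd _ _ (by simp [pow_orderOf_eq_one])
  obtain ⟨d, hd, hdvd_d⟩ := hx.prime.exists_mem_finset_dvd hdvd
  have hmonic : (minpoly ℚ x).Monic := minpoly.monic (minpoly.ne_zero_iff.mp hx.ne_zero)
  have hmin : minpoly ℚ x = cyclotomic d ℚ := eq_of_monic_of_associated hmonic
    (cyclotomic.monic d ℚ)
    (hx.associated_of_dvd (cyclotomic.irreducible_rat (Nat.pos_of_mem_divisors hd)) hdvd_d)
  have hpow : x ^ d = 1 := by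
    obtain ⟨q, hq⟩ := hmin ▸ cyclotomic.dvd_X_pow_sub_one d ℚ
    simpa [sub_eq_zero] using congrArg (aeval x) hq
  rw [hmin, Nat.dvd_antisymm (Nat.dvd_of_mem_divisors hd) (orderOf_dvd_of_pow_eq_one hpow)]

/-- Let `V` be a faithful irreducible `ℚ`-representation of a finite abelian group `A`.
Then `A ≅ C_n` for some `n` (it is generated by an element `a` of order `n = |A|`), and `V` is
isomorphic as an `A`-representation to the cyclotomic module `V_n = ℚ[t]/(Φ_n(t))`,
with the generator `a` acting by multiplication by the class `[t]`. -/
theorem faithful_irreducible_rat_rep_iso_cyclotomic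
    (A : Type*) [CommGroup A] [Finite A]
    (V : Type*) [AddCommGroup V] [Module ℚ V] [FiniteDimensional ℚ V] [Nontrivial V]
    (ρ : A →* (V ≃ₗ[ℚ] V)) (hfaith : Function.Injective ρ)
    (hirr : ∀ W : Submodule ℚ V, (∀ a : A, ∀ v ∈ W, ρ a v ∈ W) → W = ⊥ ∨ W = ⊤) :
    ∃ n : ℕ, 0 < n ∧ ∃ a : A, orderOf a = n ∧ (∀ b : A, b ∈ Subgroup.zpowers a) ∧
      ∃ e : V ≃ₗ[ℚ] (ℚ[X] ⧸ Ideal.span {cyclotomic n ℚ}),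
        ∀ v : V, e (ρ a v) = (Ideal.Quotient.mk (Ideal.span {cyclotomic n ℚ}) X) * e v := by
  let τ : A →* Module.End ℚ V := LinearEquiv.automorphismGroup.toLinearMapMonoidHom.comp ρ
  have hτ : Function.Injective τ := LinearEquiv.toLinearMap_injective.comp hfaith
  obtain ⟨a, ha⟩ := (Module.End.isCyclic_of_injective_of_irreducible τ hτ hirr).exists_generator
  have hf : ∀ W : Submodule ℚ V, (∀ v ∈ W, τ a v ∈ W) → W = ⊥ ∨ W = ⊤ := fun W hW =>
    hirr W fun b => by
      obtain ⟨k, rfl⟩ := (isOfFinOrder_of_finite a).mem_powers_iff_mem_zpowers.mpr (ha b)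
      change Set.MapsTo (τ (a ^ k)) W W
      rw [map_pow, Module.End.coe_pow]
      exact Set.MapsTo.iterate hW k
  have hord : orderOf (τ a) = orderOf a := orderOf_injective τ hτ a
  have hmin : minpoly ℚ (τ a) = cyclotomic (orderOf a) ℚ :=
    hord ▸ minpoly_eq_cyclotomic_orderOf
      (Module.End.irreducible_minpoly_of_forall_invariant _ hf) (hord ▸ orderOf_pos a)
  have he := Module.End.exists_linearEquiv_quotient_minpoly (τ a) hf
  rw [hmin] at he
  exact ⟨orderOf a, orderOf_pos a, a, rfl, ha, he⟩
end

section
/- Let H be a torus and y an automorphism of H of finite order n such that the fixed subgroup H^y is finite. For each d | n let m_y(d) be the multiplicity of any primitive d-th root of unity as an eigenvalue of the induced action of y on the Lie algebra of H. Then |H^y| = ∏_{p prime, k ≥ 1, p^k | n} p^{m_y(p^k)}. -/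
/-! Write `H = V / L` and `g = 1 - f`. A point of `H` is fixed exactly when its lifts lie in
`g⁻¹ L`, so `H^y ≅ g⁻¹ L / L`. A vector in `ker g` spans a line whose image lies in `H^y`; a
finite image of the divisible group `ℝ` is trivial, and a lattice contains no line, so `g` is
invertible. Then `g⁻¹ L / L ≅ L / g L`, whose order is
`|det g| = |χ_f(1)| = ∏_d Φ_d(1)^{m d}`. Finally `Φ_d(1) = p` for `d = p^k` with `k ≥ 1`,
`Φ_d(1) = 1` for the other `d > 1`, and `Φ_1(1) = 0` forces `m 1 = 0` since `det g ≠ 0`. -/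

open Polynomial

theorem QuotientAddGroup.setOf_forall_mk_apply_eq {V : Type*} [AddCommGroup V]
    (L : AddSubgroup V) (f : V → V) (g : V →+ V) (hg : ∀ v, g v = v - f v)
    (hgL : ∀ v ∈ L, g v ∈ L) :
    {x : V ⧸ L | ∀ v : V, (v : V ⧸ L) = x → ((f v : V) : V ⧸ L) = x} =
      ((L.comap g).map (mk' L) : Set (V ⧸ L)) := by
  have hfix : ∀ v, ((f v : V) : V ⧸ L) = v ↔ g v ∈ L := fun v => by
    rw [QuotientAddGroup.eq_iff_sub_mem, ← neg_mem_iff, neg_sub, hg]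
  ext x
  obtain ⟨v, rfl⟩ := QuotientAddGroup.mk_surjective x
  simp only [Set.mem_ofPred_eq, AddSubgroup.coe_map, Set.mem_image, SetLike.mem_coe,
    AddSubgroup.mem_comap, mk'_apply]
  constructor
  · exact fun h => ⟨v, (hfix v).mp (h v rfl), rfl⟩
  · rintro ⟨u, hu, huv⟩ w hw
    rw [← hw, hfix]
    have : w - u ∈ L := QuotientAddGroup.eq_iff_sub_mem.mp (hw.trans huv.symm)
    simpa using L.add_mem hu (hgL _ this)

theorem Submodule.relIndex_map_eq_natAbs_det {M : Type*} [AddCommGroup M]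
    (L : Submodule ℤ M) [Module.Free ℤ L] [Module.Finite ℤ L] (g : M →ₗ[ℤ] M)
    (hg : Function.Injective g) (hgL : ∀ v ∈ L, g v ∈ L) :
    (L.toAddSubgroup.map g.toAddMonoidHom).relIndex L.toAddSubgroup =
      (LinearMap.det (g.restrict hgL)).natAbs := by
  have hinj : Function.Injective (g.restrict hgL) := fun x y h =>
    Subtype.ext (hg (congrArg Subtype.val h))
  have hrange : (L.toAddSubgroup.map g.toAddMonoidHom).addSubgroupOf L.toAddSubgroup =
      (LinearMap.range (g.restrict hgL)).toAddSubgroup := by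
    ext x
    rw [LinearMap.range_restrict]
    exact Iff.rfl
  rw [AddSubgroup.relIndex, hrange, AddSubgroup.index]
  exact (Submodule.natAbs_det_equiv _ (LinearEquiv.ofInjective _ hinj)).symm

theorem Submodule.card_map_mk_comap_eq_natAbs_det {M : Type*} [AddCommGroup M]
    (L : Submodule ℤ M) [Module.Free ℤ L] [Module.Finite ℤ L] (g : M →ₗ[ℤ] M)
    (hg : Function.Bijective g) (hgL : ∀ v ∈ L, g v ∈ L) :
    Nat.card
        ((L.toAddSubgroup.comap g.toAddMonoidHom).map (QuotientAddGroup.mk' L.toAddSubgroup)) =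
      (LinearMap.det (g.restrict hgL)).natAbs := by
  rw [← AddSubgroup.relIndex_ker, QuotientAddGroup.ker_mk',
    ← AddSubgroup.relIndex_map_map_of_injective (f := g.toAddMonoidHom) _ _ hg.injective,
    AddSubgroup.map_comap_eq_self_of_surjective hg.surjective,
    L.relIndex_map_eq_natAbs_det g hg.injective hgL]

theorem AddMonoidHom.eq_zero_of_finite_range {K G : Type*} [Field K] [CharZero K]
    [AddCommGroup G] (θ : K →+ G) (hθ : (θ.range : Set G).Finite) : θ = 0 := by
  have : Finite θ.range := hθ.to_subtype
  refine AddMonoidHom.ext fun t => ?_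
  have hN : (Nat.card θ.range : K) ≠ 0 := Nat.cast_ne_zero.mpr Nat.card_pos.ne'
  have h : Nat.card θ.range • (⟨θ (t / Nat.card θ.range), t / _, rfl⟩ : θ.range) = 0 :=
    card_nsmul_eq_zero'
  rw [zero_apply, ← mul_div_cancel₀ t hN, ← nsmul_eq_mul, map_nsmul]
  exact congrArg Subtype.val h

theorem Module.Basis.eq_zero_of_forall_smul_mem_span {K V ι : Type*} [Field K] [CharZero K]
    [AddCommGroup V] [Module K V] (b : Module.Basis ι K V) {v : V}
    (hv : ∀ t : K, t • v ∈ Submodule.span ℤ (Set.range b)) : v = 0 := by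
  by_contra hv0
  obtain ⟨i, hi⟩ : ∃ i, b.repr v i ≠ 0 :=
    not_forall.mp fun h => hv0 (b.repr.map_eq_zero_iff.mp (Finsupp.ext h))
  obtain ⟨k, hk⟩ := (b.mem_span_iff_repr_mem ℤ _).mp (hv (2 * b.repr v i)⁻¹) i
  have : ((2 * k : ℤ) : K) = (1 : ℤ) := by
    rw [map_smul, Finsupp.smul_apply, smul_eq_mul, eq_intCast] at hk
    push_cast
    rw [hk]
    field_simp
  have := Int.cast_injective this
  omega

theorem LinearMap.injective_of_finite_map_mk_comap {K V : Type*} [Field K] [CharZero K]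
    [AddCommGroup V] [Module K V] {L : AddSubgroup V}
    (hL : ∀ v : V, (∀ t : K, t • v ∈ L) → v = 0)
    (g : V →ₗ[K] V)
    (hfin : ((L.comap g.toAddMonoidHom).map (QuotientAddGroup.mk' L) : Set (V ⧸ L)).Finite) :
    Function.Injective g := by
  refine (injective_iff_map_eq_zero g).mpr fun v hv => hL v fun t => ?_
  let θ := (QuotientAddGroup.mk' L).comp (toSpanSingleton K V v).toAddMonoidHom
  have hθ : (θ.range : Set (V ⧸ L)) ⊆
      (L.comap g.toAddMonoidHom).map (QuotientAddGroup.mk' L) := by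
    rintro _ ⟨s, rfl⟩
    exact ⟨s • v, by simp [hv], rfl⟩
  exact (QuotientAddGroup.eq_zero_iff _).mp
    (DFunLike.congr_fun (θ.eq_zero_of_finite_range (hfin.subset hθ)) t)

theorem LinearMap.det_eq_algebraMap_det_restrict {R S M ι : Type*} [CommRing R] [IsDomain R]
    [CommRing S] [Nontrivial S] [Algebra R S] [Module.IsTorsionFree R S] [AddCommGroup M]
    [Module S M] [Module R M] [IsScalarTower R S M] [Fintype ι] [DecidableEq ι]
    (b : Module.Basis ι S M) (g : M →ₗ[S] M)
    (hg : ∀ v ∈ Submodule.span R (Set.range b), g v ∈ Submodule.span R (Set.range b)) :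
    LinearMap.det g = algebraMap R S (LinearMap.det ((g.restrictScalars R).restrict hg)) := by
  let bR := b.restrictScalars R
  have : LinearMap.toMatrix b b g =
      (LinearMap.toMatrix bR bR ((g.restrictScalars R).restrict hg)).map (algebraMap R S) := by
    ext i j
    rw [Matrix.map_apply, LinearMap.toMatrix_apply, LinearMap.toMatrix_apply,
      Module.Basis.restrictScalars_repr_apply]
    exact congrArg (fun v => b.repr (g v) i) (b.restrictScalars_apply R j).symm
  rw [← LinearMap.det_toMatrix b, this, ← LinearMap.det_toMatrix bR]
  exact (RingHom.map_det (algebraMap R S) _).symm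

theorem Polynomial.eval_one_cyclotomic_pow_of_ne_zero {R : Type*} [CommRing R] {d k : ℕ}
    (h : eval 1 (cyclotomic d R ^ k) ≠ 0) :
    eval 1 (cyclotomic d R ^ k) = if IsPrimePow d then (d.minFac : R) ^ k else 1 := by
  split_ifs with hd
  · obtain ⟨p, j, hp, hj, rfl⟩ := hd
    have : Fact p.Prime := ⟨hp.nat_prime⟩
    obtain ⟨j, rfl⟩ := Nat.exists_eq_add_of_lt hj
    rw [eval_pow, zero_add, eval_one_cyclotomic_prime_pow, Nat.pow_minFac j.succ_ne_zero,
      hp.nat_prime.minFac_eq]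
  · rcases eq_or_ne d 1 with rfl | hd1
    · rw [eval_pow, cyclotomic_one, eval_sub, eval_X, eval_one, sub_self] at h ⊢
      obtain rfl : k = 0 := by_contra fun hk => h (zero_pow hk)
      exact pow_zero 0
    · rw [eval_pow, eval_one_cyclotomic_not_prime_pow, one_pow]
      rintro p hp (_ | j) rfl
      · exact hd1 (pow_zero p)
      · exact hd ⟨p, j + 1, hp.prime, j.succ_pos, rfl⟩

theorem Polynomial.eval_one_prod_cyclotomic_pow {R : Type*} [CommRing R] (s : Finset ℕ)
    (m : ℕ → ℕ) (h : eval 1 (∏ d ∈ s, cyclotomic d R ^ m d) ≠ 0) :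
    eval 1 (∏ d ∈ s, cyclotomic d R ^ m d) =
      ∏ d ∈ s with IsPrimePow d, (d.minFac : R) ^ m d := by
  rw [Finset.prod_filter, eval_prod] at *
  exact Finset.prod_congr rfl fun d hd =>
    eval_one_cyclotomic_pow_of_ne_zero fun h0 => h (Finset.prod_eq_zero hd h0)

theorem card_torus_fixed_points_general
    (r : ℕ) (V : Type*) [AddCommGroup V] [Module ℝ V] [FiniteDimensional ℝ V]
    (b : Module.Basis (Fin r) ℝ V) (L : Submodule ℤ V)
    (hL : L = Submodule.span ℤ (Set.range b))
    (f : V ≃ₗ[ℝ] V)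
    (hfL : ∀ v ∈ L, f v ∈ L)
    (n : ℕ)
    (m : ℕ → ℕ)
    (hchar : LinearMap.charpoly (f : V →ₗ[ℝ] V) =
      ∏ d ∈ n.divisors, (cyclotomic d ℝ) ^ m d)
    (hfin : {x : V ⧸ L.toAddSubgroup |
      ∀ v : V, (v : V ⧸ L.toAddSubgroup) = x → ((f v : V) : V ⧸ L.toAddSubgroup) = x}.Finite) :
    Nat.card {x : V ⧸ L.toAddSubgroup |
        ∀ v : V, (v : V ⧸ L.toAddSubgroup) = x → ((f v : V) : V ⧸ L.toAddSubgroup) = x} =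
      ∏ d ∈ n.divisors.filter IsPrimePow, d.minFac ^ m d := by
  subst hL
  set L := Submodule.span ℤ (Set.range b)
  have : Module.Free ℤ L := .of_basis (b.restrictScalars ℤ)
  have : Module.Finite ℤ L := .of_basis (b.restrictScalars ℤ)
  let g : V →ₗ[ℝ] V := 1 - f
  have hgL : ∀ v ∈ L, g v ∈ L := fun v hv => sub_mem hv (hfL v hv)
  have hS := QuotientAddGroup.setOf_forall_mk_apply_eq L.toAddSubgroup f
    (g.restrictScalars ℤ).toAddMonoidHom (fun _ => rfl) hgL
  have hg : Function.Bijective g := by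
    have hinj := LinearMap.injective_of_finite_map_mk_comap
      (fun v => b.eq_zero_of_forall_smul_mem_span) g (hS ▸ hfin)
    exact ⟨hinj, LinearMap.injective_iff_surjective.mp hinj⟩
  have hdetL :
      ((LinearMap.det ((g.restrictScalars ℤ).restrict hgL) : ℤ) : ℝ) = LinearMap.det g :=
    ((LinearMap.det_eq_algebraMap_det_restrict b g hgL).trans (eq_intCast _ _)).symm
  have hdet : LinearMap.det g = eval 1 (LinearMap.charpoly (f : V →ₗ[ℝ] V)) := by
    rw [LinearMap.eval_charpoly, map_one]
  have hdet0 : LinearMap.det g ≠ 0 := (LinearEquiv.ofBijective g hg).isUnit_det'.ne_zero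
  rw [hS, SetLike.coe_sort_coe, L.card_map_mk_comap_eq_natAbs_det _ hg hgL]
  apply Nat.cast_injective (R := ℝ)
  rw [Nat.cast_natAbs, Int.cast_abs, hdetL, hdet, hchar,
    eval_one_prod_cyclotomic_pow _ _ (hchar ▸ hdet ▸ hdet0)]
  push_cast
  exact abs_of_nonneg (Finset.prod_nonneg fun _ _ => by positivity)

/-- Vogan's counting lemma for tori.  Let `H = V/L` be a torus, presented by a real vector
space `V` with a full lattice `L` (the `ℤ`-span of an `ℝ`-basis `b`), and let `y` be an
automorphism of `H` of finite order `n` with finite fixed subgroup, induced by a linear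
automorphism `f` of `V` preserving `L`.  For `d ∣ n` let `m d` be the multiplicity of the
primitive `d`-th roots of unity among the eigenvalues of `f` (so that the characteristic
polynomial of `f` is `∏_{d ∣ n} Φ_d^{m d}`).  Then
`|H^y| = ∏_{p prime, k ≥ 1, p^k ∣ n} p^{m (p^k)}`. -/
theorem card_torus_fixed_points
    (r : ℕ) (V : Type*) [AddCommGroup V] [Module ℝ V] [FiniteDimensional ℝ V]
    (b : Module.Basis (Fin r) ℝ V) (L : Submodule ℤ V)
    (hL : L = Submodule.span ℤ (Set.range b))
    (f : V ≃ₗ[ℝ] V)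
    (hfL : ∀ v ∈ L, f v ∈ L) (hfL' : ∀ v ∈ L, f.symm v ∈ L)
    (n : ℕ) (hn : 0 < n) (hord : orderOf f = n)
    (m : ℕ → ℕ)
    (hchar : LinearMap.charpoly (f : V →ₗ[ℝ] V) =
      ∏ d ∈ n.divisors, (cyclotomic d ℝ) ^ m d)
    (hfin : {x : V ⧸ L.toAddSubgroup |
      ∀ v : V, (v : V ⧸ L.toAddSubgroup) = x → ((f v : V) : V ⧸ L.toAddSubgroup) = x}.Finite) :
    Nat.card {x : V ⧸ L.toAddSubgroup |
        ∀ v : V, (v : V ⧸ L.toAddSubgroup) = x → ((f v : V) : V ⧸ L.toAddSubgroup) = x} =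
      ∏ d ∈ n.divisors.filter IsPrimePow, d.minFac ^ m d :=
  card_torus_fixed_points_general r V b L hL f hfL n m hchar hfin
end

section
/- Let G be a compact Lie group of adjoint type (i.e., the adjoint map Ad: G → Aut(g) is injective) and A an abelian subgroup. Then the saturation Sat(A) = {g ∈ G : Ad(g) acts by a scalar on each A-weight space g_α of the complexified Lie algebra} is an abelian subgroup of G containing A. -/
/-! Elements of the saturation act by a scalar on every weight space, and scalars commute, so
their images under `Ad` commute on the weight vectors. These span the Lie algebra, hence the
images commute, and injectivity of `Ad` lifts this to the group. -/

namespace LinearEquiv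

variable {K V : Type*} [Field K] [AddCommGroup V] [Module K V]

def scalarOn (S : Set V) : Subgroup (V ≃ₗ[K] V) where
  carrier := {f | ∃ c : K, ∀ v ∈ S, f v = c • v}
  one_mem' := ⟨1, fun v _ => (one_smul K v).symm⟩
  mul_mem' := by
    rintro f g ⟨c, hf⟩ ⟨d, hg⟩
    exact ⟨c * d, fun v hv => by
      rw [mul_apply, hg v hv, map_smul, hf v hv, smul_smul, mul_comm]⟩
  inv_mem' := by
    rintro f ⟨c, hf⟩
    refine ⟨c⁻¹, fun v hv => f.injective ?_⟩
    rw [coe_inv, apply_symm_apply, map_smul, hf v hv, smul_smul]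
    rcases eq_or_ne c 0 with rfl | hc
    · have hv0 : v = 0 := f.injective (by rw [hf v hv, zero_smul, map_zero])
      rw [hv0, smul_zero]
    · rw [inv_mul_cancel₀ hc, one_smul]

theorem mem_scalarOn {S : Set V} {f : V ≃ₗ[K] V} :
    f ∈ scalarOn S ↔ ∃ c : K, ∀ v ∈ S, f v = c • v :=
  Iff.rfl

theorem commute_of_mem_scalarOn {ι : Type*} {S : ι → Set V}
    (hS : Submodule.span K (⋃ i, S i) = ⊤) {f g : V ≃ₗ[K] V}
    (hf : ∀ i, f ∈ scalarOn (S i)) (hg : ∀ i, g ∈ scalarOn (S i)) : Commute f g := by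
  refine toLinearMap_injective (LinearMap.ext_on hS ?_)
  intro v hv
  obtain ⟨i, hv⟩ := Set.mem_iUnion.mp hv
  obtain ⟨c, hc⟩ := hf i
  obtain ⟨d, hd⟩ := hg i
  change f (g v) = g (f v)
  rw [hd v hv, map_smul, hc v hv, map_smul, hd v hv, smul_comm]

end LinearEquiv

section Saturation

open LinearEquiv

variable {K V G : Type*} [Field K] [AddCommGroup V] [Module K V] [Group G]

def weightVectors (ρ : G →* (V ≃ₗ[K] V)) (A : Subgroup G) (α : A → K) : Set V :=
  {v | ∀ a : A, ρ a v = α a • v}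

def saturation (ρ : G →* (V ≃ₗ[K] V)) (A : Subgroup G) : Subgroup G :=
  ⨅ α : A → K, (scalarOn (weightVectors ρ A α)).comap ρ

theorem mem_saturation {ρ : G →* (V ≃ₗ[K] V)} {A : Subgroup G} {g : G} :
    g ∈ saturation ρ A ↔
      ∀ α : A → K, ∃ c : K, ∀ v : V, (∀ a : A, ρ a v = α a • v) → ρ g v = c • v := by
  simp only [saturation, Subgroup.mem_iInf, Subgroup.mem_comap, mem_scalarOn]
  rfl

theorem le_saturation (ρ : G →* (V ≃ₗ[K] V)) (A : Subgroup G) : A ≤ saturation ρ A :=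
  fun a ha => mem_saturation.mpr fun α => ⟨α ⟨a, ha⟩, fun _ hv => hv ⟨a, ha⟩⟩

theorem saturation_mul_comm {ρ : G →* (V ≃ₗ[K] V)} (hρ : Function.Injective ρ)
    {A : Subgroup G} (hA : Submodule.span K (⋃ α, weightVectors ρ A α) = ⊤)
    {x y : G} (hx : x ∈ saturation ρ A) (hy : y ∈ saturation ρ A) : x * y = y * x := by
  simp only [saturation, Subgroup.mem_iInf, Subgroup.mem_comap] at hx hy
  exact hρ (by rw [map_mul, map_mul]; exact commute_of_mem_scalarOn hA hx hy)

end Saturation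

theorem saturation_abelian_general
    (G : Type*) [Group G]
    (𝔤 : Type*) [LieRing 𝔤] [LieAlgebra ℂ 𝔤]
    (Ad : G →* (𝔤 ≃ₗ[ℂ] 𝔤))
    (hinj : Function.Injective Ad)
    (A : Subgroup G)
    (hdec : Submodule.span ℂ
        {v : 𝔤 | ∃ α : A → ℂ, ∀ a : A, Ad ↑a v = α a • v} = ⊤) :
    (∀ a ∈ A, a ∈ {g : G | ∀ α : A → ℂ, ∃ c : ℂ,
        ∀ v : 𝔤, (∀ a' : A, Ad ↑a' v = α a' • v) → Ad g v = c • v}) ∧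
    (1 : G) ∈ {g : G | ∀ α : A → ℂ, ∃ c : ℂ,
        ∀ v : 𝔤, (∀ a' : A, Ad ↑a' v = α a' • v) → Ad g v = c • v} ∧
    (∀ x ∈ {g : G | ∀ α : A → ℂ, ∃ c : ℂ,
        ∀ v : 𝔤, (∀ a' : A, Ad ↑a' v = α a' • v) → Ad g v = c • v},
     ∀ y ∈ {g : G | ∀ α : A → ℂ, ∃ c : ℂ,
        ∀ v : 𝔤, (∀ a' : A, Ad ↑a' v = α a' • v) → Ad g v = c • v},
       x * y ∈ {g : G | ∀ α : A → ℂ, ∃ c : ℂ,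
        ∀ v : 𝔤, (∀ a' : A, Ad ↑a' v = α a' • v) → Ad g v = c • v} ∧
       x⁻¹ ∈ {g : G | ∀ α : A → ℂ, ∃ c : ℂ,
        ∀ v : 𝔤, (∀ a' : A, Ad ↑a' v = α a' • v) → Ad g v = c • v} ∧
       x * y = y * x) := by
  have hsat : {g : G | ∀ α : A → ℂ, ∃ c : ℂ,
      ∀ v : 𝔤, (∀ a' : A, Ad ↑a' v = α a' • v) → Ad g v = c • v} = saturation Ad A :=
    Set.ext fun _ => mem_saturation.symm
  rw [Set.ofPred_exists] at hdec
  simp only [hsat, SetLike.mem_coe]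
  exact ⟨le_saturation Ad A, one_mem _, fun x hx y hy =>
    ⟨mul_mem hx hy, inv_mem hx, saturation_mul_comm hinj hdec hx hy⟩⟩

/-- Saturation is abelian.  Let `G` be a compact Lie group of adjoint type, modelled by an
injective adjoint representation `Ad : G →* GL(𝔤)` on its (complexified, finite-dimensional)
Lie algebra `𝔤`, acting by Lie algebra automorphisms, and let `A` be an abelian subgroup.
Under the weight decomposition of `𝔤` for `A` (the weight vectors span `𝔤`), the saturation
`Sat(A) = {g ∈ G : Ad(g) acts by a scalar on each A-weight space}` is an abelian subgroup
of `G` containing `A`. -/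
theorem saturation_abelian
    (G : Type*) [Group G] [TopologicalSpace G] [IsTopologicalGroup G] [CompactSpace G]
    (𝔤 : Type*) [LieRing 𝔤] [LieAlgebra ℂ 𝔤] [FiniteDimensional ℂ 𝔤]
    (Ad : G →* (𝔤 ≃ₗ[ℂ] 𝔤))
    (hbr : ∀ (g : G) (x y : 𝔤), Ad g ⁅x, y⁆ = ⁅Ad g x, Ad g y⁆)
    (hinj : Function.Injective Ad)
    (A : Subgroup G) (hA : ∀ a ∈ A, ∀ b ∈ A, a * b = b * a)
    (hdec : Submodule.span ℂ
        {v : 𝔤 | ∃ α : A → ℂ, ∀ a : A, Ad ↑a v = α a • v} = ⊤) :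
    (∀ a ∈ A, a ∈ {g : G | ∀ α : A → ℂ, ∃ c : ℂ,
        ∀ v : 𝔤, (∀ a' : A, Ad ↑a' v = α a' • v) → Ad g v = c • v}) ∧
    (1 : G) ∈ {g : G | ∀ α : A → ℂ, ∃ c : ℂ,
        ∀ v : 𝔤, (∀ a' : A, Ad ↑a' v = α a' • v) → Ad g v = c • v} ∧
    (∀ x ∈ {g : G | ∀ α : A → ℂ, ∃ c : ℂ,
        ∀ v : 𝔤, (∀ a' : A, Ad ↑a' v = α a' • v) → Ad g v = c • v},
     ∀ y ∈ {g : G | ∀ α : A → ℂ, ∃ c : ℂ,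
        ∀ v : 𝔤, (∀ a' : A, Ad ↑a' v = α a' • v) → Ad g v = c • v},
       x * y ∈ {g : G | ∀ α : A → ℂ, ∃ c : ℂ,
        ∀ v : 𝔤, (∀ a' : A, Ad ↑a' v = α a' • v) → Ad g v = c • v} ∧
       x⁻¹ ∈ {g : G | ∀ α : A → ℂ, ∃ c : ℂ,
        ∀ v : 𝔤, (∀ a' : A, Ad ↑a' v = α a' • v) → Ad g v = c • v} ∧
       x * y = y * x) :=
  saturation_abelian_general G 𝔤 Ad hinj A hdec
end

section
/- Let G be a compact Lie group of adjoint type and A a maximal abelian subgroup. Then A is saturated, i.e., Sat(A) = A, where Sat(A) = {g ∈ G : Ad(g) is a scalar on every A-weight space of the complexified Lie algebra}. -/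
/-!
If `Ad g` is a scalar on every `A`-weight space, then `Ad g` commutes with every `Ad a`, `a ∈ A`,
since both act diagonally with respect to the same spanning set of weight vectors. Injectivity
of `Ad` makes `g` centralize `A`, so `A` and `g` generate an abelian subgroup, which by
maximality is `A` itself.
-/

open Submodule

theorem Module.End.commute_of_span_eigenvectors {R M : Type*} [CommSemiring R] [AddCommMonoid M]
    [Module R M] {s : Set M} (hs : span R s = ⊤) {f g : Module.End R M}
    (hf : ∀ v ∈ s, ∃ c : R, f v = c • v) (hg : ∀ v ∈ s, ∃ c : R, g v = c • v) :
    Commute f g :=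
  LinearMap.ext_on hs fun v hv => by
    obtain ⟨c, hc⟩ := hf v hv
    obtain ⟨d, hd⟩ := hg v hv
    simp only [Module.End.mul_apply, hc, hd, map_smul, smul_comm c d]

theorem Subgroup.centralizer_le_of_maximal_commutative {G : Type*} [Group G] {A : Subgroup G}
    (hA : ∀ a ∈ A, ∀ b ∈ A, a * b = b * a)
    (hmax : ∀ B : Subgroup G, (∀ x ∈ B, ∀ y ∈ B, x * y = y * x) → A ≤ B → B = A) :
    centralizer (A : Set G) ≤ A := by
  intro g hg
  have hcomm : ∀ x ∈ insert g (A : Set G), ∀ y ∈ insert g (A : Set G), x * y = y * x := by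
    rintro x (rfl | hx) y (rfl | hy)
    · rfl
    · exact (hg y hy).symm
    · exact hg x hx
    · exact hA x hx y hy
  have := isMulCommutative_closure hcomm
  rw [← hmax (closure (insert g A)) (fun x hx y hy => setLike_mul_comm hx hy)
    ((Set.subset_insert _ _).trans subset_closure)]
  exact subset_closure (Set.mem_insert _ _)

theorem mem_centralizer_of_smul_on_weightVectors {G K V : Type*} [Group G] [CommSemiring K]
    [AddCommMonoid V] [Module K V] (ρ : G →* (V ≃ₗ[K] V)) (hρ : Function.Injective ρ)
    (A : Subgroup G) (hdec : span K {v : V | ∃ α : A → K, ∀ a : A, ρ a v = α a • v} = ⊤)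
    {g : G} (hg : ∀ α : A → K, ∃ c : K, ∀ v : V, (∀ a : A, ρ a v = α a • v) → ρ g v = c • v) :
    g ∈ Subgroup.centralizer (A : Set G) := by
  intro a ha
  have hcomm : Commute (ρ a : Module.End K V) (ρ g) :=
    Module.End.commute_of_span_eigenvectors hdec
      (fun _ ⟨α, hα⟩ => ⟨α ⟨a, ha⟩, hα ⟨a, ha⟩⟩)
      (fun v ⟨α, hα⟩ => (hg α).imp fun c hc => hc v hα)
  apply hρ
  apply LinearEquiv.toLinearMap_injective
  simpa [map_mul] using hcomm.eq

theorem maximal_abelian_saturated_general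
    (G : Type*) [Group G]
    (𝔤 : Type*) [LieRing 𝔤] [LieAlgebra ℂ 𝔤]
    (Ad : G →* (𝔤 ≃ₗ[ℂ] 𝔤))
    (hinj : Function.Injective Ad)
    (A : Subgroup G) (hA : ∀ a ∈ A, ∀ b ∈ A, a * b = b * a)
    (hmax : ∀ B : Subgroup G, (∀ x ∈ B, ∀ y ∈ B, x * y = y * x) → A ≤ B → B = A)
    (hdec : Submodule.span ℂ
        {v : 𝔤 | ∃ α : A → ℂ, ∀ a : A, Ad ↑a v = α a • v} = ⊤) :
    {g : G | ∀ α : A → ℂ, ∃ c : ℂ,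
        ∀ v : 𝔤, (∀ a' : A, Ad ↑a' v = α a' • v) → Ad g v = c • v} = (A : Set G) := by
  ext g
  constructor
  · intro hg
    exact Subgroup.centralizer_le_of_maximal_commutative hA hmax
      (mem_centralizer_of_smul_on_weightVectors Ad hinj A hdec hg)
  · intro ha α
    exact ⟨α ⟨g, ha⟩, fun _ hv => hv ⟨g, ha⟩⟩

/-- A maximal abelian subgroup is saturated.  Let `G` be a compact Lie group of adjoint type,
modelled by an injective adjoint representation `Ad : G →* GL(𝔤)` on its complexified
finite-dimensional Lie algebra `𝔤`, acting by Lie algebra automorphisms, and let `A` be a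
maximal abelian subgroup.  Under the weight decomposition of `𝔤` for `A`, the saturation
`Sat(A) = {g ∈ G : Ad(g) is a scalar on every A-weight space}` equals `A`. -/
theorem maximal_abelian_saturated
    (G : Type*) [Group G] [TopologicalSpace G] [IsTopologicalGroup G] [CompactSpace G]
    (𝔤 : Type*) [LieRing 𝔤] [LieAlgebra ℂ 𝔤] [FiniteDimensional ℂ 𝔤]
    (Ad : G →* (𝔤 ≃ₗ[ℂ] 𝔤))
    (hbr : ∀ (g : G) (x y : 𝔤), Ad g ⁅x, y⁆ = ⁅Ad g x, Ad g y⁆)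
    (hinj : Function.Injective Ad)
    (A : Subgroup G) (hA : ∀ a ∈ A, ∀ b ∈ A, a * b = b * a)
    (hmax : ∀ B : Subgroup G, (∀ x ∈ B, ∀ y ∈ B, x * y = y * x) → A ≤ B → B = A)
    (hdec : Submodule.span ℂ
        {v : 𝔤 | ∃ α : A → ℂ, ∀ a : A, Ad ↑a v = α a • v} = ⊤) :
    {g : G | ∀ α : A → ℂ, ∃ c : ℂ,
        ∀ v : 𝔤, (∀ a' : A, Ad ↑a' v = α a' • v) → Ad g v = c • v} = (A : Set G) :=
  maximal_abelian_saturated_general G 𝔤 Ad hinj A hA hmax hdec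
end
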